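/- Let R be a finite-dimensional semisimple algebra over an algebraically closed field F, so R ≅ ⊕_i End(V_i). Then the minimal CH-norm of R is the determinant of the minimal faithful representation ⊕_i V_i, i.e., N(r) = ∏_i det(r|_{V_i}). -/

import Mathlib

open TensorProduct

variable {F R ι : Type*}

/-- The polynomial function on `R` attached to a polynomial in the coordinates
along the basis `b`. -/
noncomputable def polyFun [Field F] [Ring R] [Algebra F R] [Fintype ι]
    (b : Module.Basis ι F R) (p : MvPolynomial ι F) : R → F :=
  fun r => MvPolynomial.eval (fun i => b.repr r i) p

/-- The abstract characteristic polynomial `χ_a(t) = N(t·1 - a)` of an element `a`,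
for the polynomial map attached to `p`. -/
noncomputable def charPolyOf [Field F] [Ring R] [Algebra F R] [Fintype ι]
    (b : Module.Basis ι F R) (p : MvPolynomial ι F) (a : R) : Polynomial F :=
  MvPolynomial.aeval
    (fun i => Polynomial.C (b.repr 1 i) * Polynomial.X - Polynomial.C (b.repr a i)) p

/-- `p` defines a Cayley–Hamilton norm of degree `n` on `R` (w.r.t. the basis `b`):
homogeneous of degree `n`, multiplicative, and every element satisfies its abstract
characteristic polynomial. -/
structure IsCHNorm [Field F] [Ring R] [Algebra F R] [Fintype ι]
    (b : Module.Basis ι F R) (n : ℕ) (p : MvPolynomial ι F) : Prop where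
  homog : ∀ (α : F) (r : R), polyFun b p (α • r) = α ^ n * polyFun b p r
  mult : ∀ x y : R, polyFun b p (x * y) = polyFun b p x * polyFun b p y
  ch : ∀ a : R, Polynomial.aeval a (charPolyOf b p a) = 0

/-- The generic element `x = Σ xᵢ aᵢ` of `R ⊗ K`, `K` the rational function field. -/
noncomputable def genElt [Field F] [Ring R] [Algebra F R] [Fintype ι] (b : Module.Basis ι F R) :
    FractionRing (MvPolynomial ι F) ⊗[F] R :=
  ∑ i, algebraMap (MvPolynomial ι F) (FractionRing (MvPolynomial ι F)) (MvPolynomial.X i)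
    ⊗ₜ[F] b i

/-!
A CH-norm `N` is multiplicative, so unless it vanishes identically it is a monoid homomorphism
`∏ᵢ End(Vᵢ) → F` that is polynomial along affine lines. On a matrix algebra such a homomorphism
kills every transvection (conjugating by a diagonal matrix rescales a transvection, so each one is
a commutator), is `∏ⱼ dⱼ ^ m` on diagonal matrices for a single exponent `m` (a multiplicative
polynomial in one variable is a monomial, and permutation matrices conjugate the coordinates into
each other), and hence equals `det ^ m` by Gaussian elimination. Thus `N r = ∏ᵢ det (rᵢ) ^ kᵢ`.
The element that is `0` in block `i` and `1` elsewhere is killed by the projection to `End(Vᵢ)`,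
so by Cayley–Hamilton it is a root of `N`; this forces `kᵢ ≥ 1`.
-/

open Polynomial in
theorem Polynomial.eq_X_pow_natDegree_of_eval_mul {R : Type*} [CommRing R] [IsDomain R]
    [Infinite R] {q : R[X]} (hq : q ≠ 0) (hmul : ∀ s t, q.eval (s * t) = q.eval s * q.eval t) :
    q = X ^ q.natDegree := by
  have hcomp : ∀ s, q.comp (C s * X) = C (q.eval s) * q := fun s =>
    Polynomial.funext fun t => by simp [hmul]
  refine Polynomial.funext fun s => mul_left_cancel₀ (leadingCoeff_ne_zero.mpr hq) ?_
  have hcoeff := congrArg (coeff · q.natDegree) (hcomp s)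
  simp only [comp_C_mul_X_coeff, coeff_C_mul] at hcoeff
  rw [eval_pow, eval_X, leadingCoeff, hcoeff, mul_comm]

open Polynomial in
theorem Polynomial.eval_mvPolynomial_aeval {σ : Type*} [CommSemiring F] (g : σ → F[X])
    (q : MvPolynomial σ F) (t : F) :
    (MvPolynomial.aeval g q).eval t = MvPolynomial.eval (fun s => (g s).eval t) q :=
  DFunLike.congr_fun (MvPolynomial.comp_aeval g (Polynomial.aeval t)) q

theorem Pi.mulSingle_eq_mulSingle_zero_add_single {κ : Type*} [DecidableEq κ] {A : κ → Type*}
    [∀ i, AddZeroClass (A i)] [∀ i, One (A i)] (i : κ) (x : A i) :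
    Pi.mulSingle i x = Pi.mulSingle i 0 + Pi.single i x := by
  ext j
  rcases eq_or_ne j i with rfl | hj
  · simp
  · simp [hj]

theorem MonoidHom.map_pi_eq_prod {κ : Type*} [Fintype κ] [DecidableEq κ] {M : κ → Type*}
    [∀ i, Monoid (M i)] {N : Type*} [CommMonoid N] (f : (∀ i, M i) →* N) (x : ∀ i, M i) :
    f x = ∏ i, f (Pi.mulSingle i (x i)) :=
  (congrArg f (Finset.noncommProd_mulSingle x)).symm.trans
    ((Finset.univ.map_noncommProd _ _ f).trans (Finset.noncommProd_eq_prod _ _))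

open Polynomial in
def IsPolynomialAlongLines {E : Type*} [CommSemiring F] [AddCommMonoid E] [Module F E]
    (f : E → F) : Prop :=
  ∀ x y : E, ∃ q : F[X], ∀ t : F, f (x + t • y) = q.eval t

theorem IsPolynomialAlongLines.comp_add_linearMap {E E' : Type*} [CommSemiring F] [AddCommMonoid E]
    [Module F E] [AddCommMonoid E'] [Module F E'] {f : E → F} (hf : IsPolynomialAlongLines f)
    (x₀ : E) (L : E' →ₗ[F] E) : IsPolynomialAlongLines (fun x => f (x₀ + L x)) := by
  intro x y
  obtain ⟨q, hq⟩ := hf (x₀ + L x) (L y)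
  exact ⟨q, fun t => by simp only [map_add, map_smul, ← add_assoc, hq]⟩

namespace Matrix

variable {n M : Type*} [Fintype n] [DecidableEq n] [CommMonoid M]

theorem diagonal_mulSingle_mul_transvection_mul_diagonal_mulSingle_inv [Field F] {i j : n}
    (hij : i ≠ j) {μ : F} (hμ : μ ≠ 0) (c : F) :
    diagonal (Pi.mulSingle i μ) * transvection i j c * diagonal (Pi.mulSingle i μ⁻¹) =
      transvection i j (μ * c) := by
  ext a b
  simp only [transvection, diagonal_mul, mul_diagonal, add_apply, one_apply, single_apply,
    Pi.mulSingle_apply]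
  grind

theorem _root_.MonoidHom.map_transvection [Field F] (f : Matrix n n F →* M) {μ : F}
    (hμ₀ : μ ≠ 0) (hμ₁ : μ ≠ 1) {i j : n} (hij : i ≠ j) (c : F) : f (transvection i j c) = 1 := by
  have hD : diagonal (Pi.mulSingle i μ) * diagonal (Pi.mulSingle i μ⁻¹) = 1 := by
    rw [diagonal_mul_diagonal, ← Pi.mul_def, ← Pi.mulSingle_mul, mul_inv_cancel₀ hμ₀,
      Pi.mulSingle_one]
    exact diagonal_one
  have hcommutator : ∀ c, f (transvection i j ((μ - 1) * c)) = 1 := fun c => calc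
    f (transvection i j ((μ - 1) * c))
        = f (diagonal (Pi.mulSingle i μ) * transvection i j c * diagonal (Pi.mulSingle i μ⁻¹) *
            transvection i j (-c)) := by
          rw [diagonal_mulSingle_mul_transvection_mul_diagonal_mulSingle_inv hij hμ₀,
            transvection_mul_transvection_same i j hij, sub_mul, one_mul, sub_eq_add_neg]
    _ = f (diagonal (Pi.mulSingle i μ) * diagonal (Pi.mulSingle i μ⁻¹)) *
          f (transvection i j c * transvection i j (-c)) := by
          simp only [map_mul, mul_comm, mul_left_comm, mul_assoc]
    _ = 1 := by
          rw [hD, transvection_mul_transvection_same i j hij, add_neg_cancel, transvection_zero,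
            map_one, one_mul]
  simpa [mul_div_cancel₀ c (sub_ne_zero.mpr hμ₁)] using hcommutator (c / (μ - 1))

theorem _root_.MonoidHom.map_submatrix_equiv {S : Type*} [CommSemiring S]
    (f : Matrix n n S →* M) (e : n ≃ n) (A : Matrix n n S) : f (A.submatrix e e) = f A := by
  have hPQ : (1 : Matrix n n S).submatrix e (Equiv.refl n) *
      (1 : Matrix n n S).submatrix (Equiv.refl n) e = 1 := by
    rw [mul_submatrix_one, submatrix_submatrix]
    simp
  calc f (A.submatrix e e)
      = f ((1 : Matrix n n S).submatrix e (Equiv.refl n) * A *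
          (1 : Matrix n n S).submatrix (Equiv.refl n) e) := by
        rw [one_submatrix_mul, mul_submatrix_one]; rfl
    _ = f ((1 : Matrix n n S).submatrix e (Equiv.refl n) *
          (1 : Matrix n n S).submatrix (Equiv.refl n) e) * f A := by
        rw [map_mul, map_mul, map_mul, mul_right_comm]
    _ = f A := by rw [hPQ, map_one, one_mul]

theorem _root_.MonoidHom.map_diagonal_eq_prod {S : Type*} [CommSemiring S]
    (f : Matrix n n S →* M) (d : n → S) :
    f (diagonal d) = ∏ j, f (diagonal (Pi.mulSingle j (d j))) := by
  conv_lhs => rw [← Finset.univ_prod_mulSingle d]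
  exact map_prod (f.comp (diagonalRingHom n S).toMonoidHom) _ _

end Matrix

namespace MonoidHom

open Matrix Polynomial

variable [Field F] [Infinite F]

theorem exists_map_diagonal_mulSingle_eq_pow {n : Type*} [Fintype n] [DecidableEq n]
    (f : Matrix n n F →* F) (hf : IsPolynomialAlongLines f) (j : n) :
    ∃ m : ℕ, ∀ t : F, f (diagonal (Pi.mulSingle j t)) = t ^ m := by
  obtain ⟨q, hq⟩ := hf (diagonal (Pi.mulSingle j 0)) (diagonal (Pi.single j 1))
  have hline : ∀ t, f (diagonal (Pi.mulSingle j t)) = q.eval t := fun t => by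
    rw [← hq, ← diagonal_smul, diagonal_add, ← Pi.single_smul, smul_eq_mul, mul_one, ← Pi.add_def,
      ← Pi.mulSingle_eq_mulSingle_zero_add_single]
  have hmul : ∀ s t, q.eval (s * t) = q.eval s * q.eval t := fun s t => by
    rw [← hline, ← hline, ← hline, ← map_mul, diagonal_mul_diagonal, ← Pi.mul_def,
      Pi.mulSingle_mul]
  have hq0 : q ≠ 0 := by
    rintro rfl
    simpa [Pi.mulSingle_one] using hline 1
  exact ⟨q.natDegree, fun t => by
    rw [hline, congrArg (Polynomial.eval t) (eq_X_pow_natDegree_of_eval_mul hq0 hmul), eval_pow,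
      eval_X]⟩

theorem exists_eq_det_pow {n : Type*} [Fintype n] [DecidableEq n] (f : Matrix n n F →* F)
    (hf : IsPolynomialAlongLines f) : ∃ k : ℕ, ∀ A, f A = A.det ^ k := by
  classical
  cases isEmpty_or_nonempty n with
  | inl _ => exact ⟨0, fun A => by rw [Subsingleton.elim A 1, map_one, pow_zero]⟩
  | inr hn =>
  obtain ⟨j₀⟩ := hn
  obtain ⟨k, hk⟩ := exists_map_diagonal_mulSingle_eq_pow f hf j₀
  have hk' : ∀ j t, f (diagonal (Pi.mulSingle j t)) = t ^ k := fun j t => by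
    rw [← hk t, ← f.map_submatrix_equiv (Equiv.swap j₀ j), submatrix_diagonal_equiv,
      Pi.mulSingle_comp_equiv, Equiv.symm_swap, Equiv.swap_apply_right]
  obtain ⟨μ, hμ⟩ := Infinite.exists_notMem_finset ({0, 1} : Finset F)
  simp only [Finset.mem_insert, Finset.mem_singleton, not_or] at hμ
  refine ⟨k, fun A => diagonal_transvection_induction (fun A => f A = A.det ^ k) A ?_ ?_ ?_⟩
  · intro D _
    rw [f.map_diagonal_eq_prod, det_diagonal, ← Finset.prod_pow]
    exact Finset.prod_congr rfl fun j _ => hk' j (D j)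
  · rintro ⟨i, j, hij, c⟩
    rw [TransvectionStruct.toMatrix_mk, f.map_transvection hμ.1 hμ.2 hij,
      det_transvection_of_ne _ _ hij, one_pow]
  · intro A B hA hB
    rw [map_mul, det_mul, mul_pow, hA, hB]

theorem exists_eq_linearMap_det_pow {V : Type*} [AddCommGroup V] [Module F V]
    [FiniteDimensional F V] (f : Module.End F V →* F) (hf : IsPolynomialAlongLines f) :
    ∃ k : ℕ, ∀ g, f g = LinearMap.det g ^ k := by
  let c := Module.finBasis F V
  have hf' : IsPolynomialAlongLines (fun A => f (Matrix.toLinAlgEquiv c A)) := by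
    simpa using hf.comp_add_linearMap 0 (Matrix.toLinAlgEquiv c).toLinearMap
  obtain ⟨k, hk⟩ := exists_eq_det_pow (f.comp (Matrix.toLinAlgEquiv c).toRingEquiv.toMonoidHom) hf'
  refine ⟨k, fun g => ?_⟩
  rw [← LinearMap.det_toMatrix c, ← hk]
  exact congrArg f (Matrix.toLin_toMatrix c c g).symm

theorem exists_eq_prod_det_pow [Fintype ι] [DecidableEq ι] {V : ι → Type*}
    [∀ i, AddCommGroup (V i)] [∀ i, Module F (V i)] [∀ i, FiniteDimensional F (V i)]
    (f : (∀ i, Module.End F (V i)) →* F) (hf : IsPolynomialAlongLines f) :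
    ∃ k : ι → ℕ, ∀ r, f r = ∏ i, LinearMap.det (r i) ^ k i := by
  have hblock : ∀ i, ∃ k : ℕ, ∀ g, f (Pi.mulSingle i g) = LinearMap.det g ^ k := fun i => by
    refine exists_eq_linearMap_det_pow
      (f.comp (MonoidHom.mulSingle (fun i => Module.End F (V i)) i)) ?_
    have := hf.comp_add_linearMap (Pi.mulSingle i 0) (LinearMap.single F _ i)
    simpa [← Pi.mulSingle_eq_mulSingle_zero_add_single, Function.comp_def] using this
  choose k hk using hblock
  exact ⟨k, fun r => (f.map_pi_eq_prod r).trans (Finset.prod_congr rfl fun i _ => hk i (r i))⟩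

end MonoidHom

section PolyFun

open MvPolynomial

variable [Field F] [Ring R] [Algebra F R] [Fintype ι] (b : Module.Basis ι F R)

theorem polyFun_aeval {σ : Type*} (g : σ → MvPolynomial ι F) (q : MvPolynomial σ F) (r : R) :
    polyFun b (aeval g q) r = eval (fun s => polyFun b (g s) r) q :=
  DFunLike.congr_fun (comp_aeval g (aeval fun i => b.repr r i)) q

theorem exists_polyFun_eq_linearMap (ℓ : R →ₗ[F] F) :
    ∃ p : MvPolynomial ι F, ∀ r, polyFun b p r = ℓ r := by
  refine ⟨∑ i, C (ℓ (b i)) * X i, fun r => ?_⟩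
  simp only [polyFun, map_sum, map_mul, eval_C, eval_X]
  conv_rhs => rw [← b.sum_repr r, map_sum]
  simp_rw [map_smul, smul_eq_mul, mul_comm]

theorem exists_polyFun_eq_det {n : Type*} [Fintype n] [DecidableEq n]
    (L : R →ₗ[F] Matrix n n F) : ∃ p : MvPolynomial ι F, ∀ r, polyFun b p r = (L r).det := by
  choose entry hentry using fun s : n × n =>
    exists_polyFun_eq_linearMap b ((Matrix.entryLinearMap F F s.1 s.2).comp L)
  refine ⟨aeval entry (Matrix.mvPolynomialX n n F).det, fun r => ?_⟩
  rw [polyFun_aeval, RingHom.map_det]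
  congr 1
  ext i j
  simp [Matrix.mvPolynomialX, hentry]

theorem isPolynomialAlongLines_polyFun (p : MvPolynomial ι F) :
    IsPolynomialAlongLines (polyFun b p) := by
  intro x y
  refine ⟨aeval (fun i => Polynomial.C (b.repr x i) + Polynomial.C (b.repr y i) * Polynomial.X) p,
    fun t => ?_⟩
  simp only [Polynomial.eval_mvPolynomial_aeval, polyFun, Polynomial.eval_add, Polynomial.eval_mul,
    Polynomial.eval_C, Polynomial.eval_X, map_add, map_smul, Finsupp.add_apply, Finsupp.smul_apply,
    smul_eq_mul, mul_comm]

theorem eval_charPolyOf (p : MvPolynomial ι F) (a : R) (t : F) :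
    (charPolyOf b p a).eval t = polyFun b p (algebraMap F R t - a) := by
  simp only [charPolyOf, Polynomial.eval_mvPolynomial_aeval, polyFun, Polynomial.eval_sub,
    Polynomial.eval_mul, Polynomial.eval_C, Polynomial.eval_X, Algebra.algebraMap_eq_smul_one,
    map_sub, map_smul, Finsupp.sub_apply, Finsupp.smul_apply, smul_eq_mul, mul_comm]

theorem IsCHNorm.polyFun_eq_zero_of_map_eq_zero {n : ℕ} {N : MvPolynomial ι F}
    (hN : IsCHNorm b n N) {A : Type*} [Ring A] [Algebra F A] [Nontrivial A] (π : R →ₐ[F] A)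
    {x : R} (hx : π x = 0) : polyFun b N x = 0 := by
  have hch := congrArg π (hN.ch (-x))
  rw [← Polynomial.aeval_algHom_apply, map_neg, hx, neg_zero,
    ← Polynomial.coeff_zero_eq_aeval_zero', Polynomial.coeff_zero_eq_eval_zero, eval_charPolyOf,
    map_zero, map_zero, zero_sub, neg_neg] at hch
  exact (map_eq_zero_iff _ (algebraMap F A).injective).mp hch

end PolyFun

section EndomorphismProduct

variable {κ : Type*} [Field F] [Fintype ι] [Fintype κ] {V : ι → Type*}
  [∀ i, AddCommGroup (V i)] [∀ i, Module F (V i)] [∀ i, FiniteDimensional F (V i)]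
  (b : Module.Basis κ F (∀ i, Module.End F (V i)))

theorem exists_polyFun_eq_prod_det_pow (m : ι → ℕ) :
    ∃ p : MvPolynomial κ F, ∀ r, polyFun b p r = ∏ i, LinearMap.det (r i) ^ m i := by
  have hdet : ∀ i, ∃ p : MvPolynomial κ F, ∀ r, polyFun b p r = LinearMap.det (r i) := fun i => by
    let c := Module.finBasis F (V i)
    obtain ⟨p, hp⟩ := exists_polyFun_eq_det b
      ((LinearMap.toMatrix c c).toLinearMap.comp (LinearMap.proj i))
    exact ⟨p, fun r => (hp r).trans (LinearMap.det_toMatrix c (r i))⟩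
  choose d hd using hdet
  refine ⟨∏ i, d i ^ m i, fun r => ?_⟩
  simp only [polyFun] at hd ⊢
  simp [map_prod, hd]

theorem isCHNorm_of_polyFun_eq_prod_det [Infinite F] {p : MvPolynomial κ F}
    (hp : ∀ r, polyFun b p r = ∏ i, LinearMap.det (r i)) :
    IsCHNorm b (∑ i, Module.finrank F (V i)) p where
  homog α r := by
    simp only [hp, Pi.smul_apply, LinearMap.det_smul, Finset.prod_mul_distrib,
      Finset.prod_pow_eq_pow_sum]
  mult x y := by simp only [hp, Pi.mul_apply, map_mul, Finset.prod_mul_distrib]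
  ch a := by
    have hχ : charPolyOf b p a = ∏ i, LinearMap.charpoly (a i) := Polynomial.funext fun t => by
      simp [eval_charPolyOf, hp, Polynomial.eval_prod, LinearMap.eval_charpoly]
    rw [hχ]
    funext j
    exact (Polynomial.aeval_algHom_apply (Pi.evalAlgHom F _ j) a _).symm.trans
      (Polynomial.aeval_eq_zero_of_dvd_aeval_eq_zero (Finset.dvd_prod_of_mem _ (Finset.mem_univ j))
        (LinearMap.aeval_self_charpoly (a j)))

theorem IsCHNorm.ne_zero_of_polyFun_eq_prod_det_pow [DecidableEq ι] {n : ℕ}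
    {N : MvPolynomial κ F} (hN : IsCHNorm b n N) {k : ι → ℕ}
    (hk : ∀ r, polyFun b N r = ∏ i, LinearMap.det (r i) ^ k i) {i : ι}
    (hVi : 0 < Module.finrank F (V i)) : k i ≠ 0 := by
  intro hki
  have := Module.nontrivial_of_finrank_pos hVi
  have hzero := hN.polyFun_eq_zero_of_map_eq_zero b (Pi.evalAlgHom F _ i)
    (x := Pi.mulSingle i 0) (by simp)
  refine one_ne_zero (Eq.trans ?_ hzero)
  rw [hk]
  refine (Finset.prod_eq_one fun j _ => ?_).symm
  rcases eq_or_ne j i with rfl | hj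
  · simp [hki]
  · simp [hj]

theorem IsCHNorm.exists_polyFun_eq_mul_prod_det [DecidableEq ι] [Infinite F]
    (hV : ∀ i, 0 < Module.finrank F (V i)) {k : ℕ} {N : MvPolynomial κ F} (hN : IsCHNorm b k N) :
    ∃ g : MvPolynomial κ F, (∀ x y, polyFun b g (x * y) = polyFun b g x * polyFun b g y) ∧
      ∀ r, polyFun b N r = polyFun b g r * ∏ i, LinearMap.det (r i) := by
  by_cases hN1 : polyFun b N 1 = 0
  · refine ⟨0, by simp [polyFun], fun r => ?_⟩
    have hr := hN.mult r 1
    rw [mul_one, hN1, mul_zero] at hr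
    rw [hr]
    simp [polyFun]
  have hone : polyFun b N 1 = 1 := by
    have h11 := hN.mult 1 1
    rw [mul_one] at h11
    exact mul_left_cancel₀ hN1 (by rw [mul_one, ← h11])
  let f : (∀ i, Module.End F (V i)) →* F :=
    { toFun := polyFun b N, map_one' := hone, map_mul' := hN.mult }
  obtain ⟨e, he⟩ := f.exists_eq_prod_det_pow (isPolynomialAlongLines_polyFun b N)
  obtain ⟨g, hg⟩ := exists_polyFun_eq_prod_det_pow b (fun i => e i - 1)
  refine ⟨g, fun x y => by simp only [hg, Pi.mul_apply, map_mul, mul_pow, Finset.prod_mul_distrib],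
    fun r => ?_⟩
  rw [hg, ← Finset.prod_mul_distrib]
  refine (he r).trans (Finset.prod_congr rfl fun i _ => ?_)
  have hei := hN.ne_zero_of_polyFun_eq_prod_det_pow b he (hV i)
  rw [← pow_succ, Nat.sub_add_cancel (Nat.one_le_iff_ne_zero.mpr hei)]

end EndomorphismProduct

/-- For a finite-dimensional semisimple algebra `R = ⊕ᵢ End(Vᵢ)` over an algebraically
closed field, the minimal CH-norm is the determinant of the minimal faithful representation
`⊕ᵢ Vᵢ`, i.e. `N(r) = ∏ᵢ det (r i)`. -/
theorem stmt17 {F ι κ : Type*} [Field F] [IsAlgClosed F] [Fintype ι] [Fintype κ]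
    (V : ι → Type*) [∀ i, AddCommGroup (V i)] [∀ i, Module F (V i)]
    [∀ i, FiniteDimensional F (V i)] (hV : ∀ i, 0 < Module.finrank F (V i))
    (b : Module.Basis κ F (∀ i, Module.End F (V i))) :
    ∃ p : MvPolynomial κ F,
      (∀ r : ∀ i, Module.End F (V i), polyFun b p r = ∏ i, LinearMap.det (r i)) ∧
      IsCHNorm b (∑ i, Module.finrank F (V i)) p ∧
      ∀ (k : ℕ) (N : MvPolynomial κ F), IsCHNorm b k N →
        ∃ g : MvPolynomial κ F,
          (∀ x y : ∀ i, Module.End F (V i),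
            polyFun b g (x * y) = polyFun b g x * polyFun b g y) ∧
          ∀ r : ∀ i, Module.End F (V i),
            polyFun b N r = polyFun b g r * ∏ i, LinearMap.det (r i) := by
  classical
  obtain ⟨p, hp⟩ := exists_polyFun_eq_prod_det_pow b (fun _ => 1)
  simp only [pow_one] at hp
  exact ⟨p, hp, isCHNorm_of_polyFun_eq_prod_det b hp,
    fun _ _ hN => hN.exists_polyFun_eq_mul_prod_det b hV⟩
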